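/- arXiv:2212.07263 — 2 statements merged into one kernel-verified Lean document; each statement's English description precedes it below -/
import Mathlib

section
/- Let d ≥ 1 and κ₃, κ₄ : Fin d → ℝ. Let v₃ be the real matrix with rows indexed by functions Fin 2 → Fin d and columns by Fin d whose (f, m) entry is κ₃(m) if f is constantly m and 0 otherwise, and let v₄ be the real matrix with rows indexed by functions Fin 3 → Fin d and columns by Fin d whose (f, m) entry is κ₄(m) if f is constantly m and 0 otherwise. Then the vertically stacked matrix [v₃; v₄] (rows indexed by the sum type) has rank equal to the number of indices m with κ₃(m) ≠ 0 or κ₄(m) ≠ 0. -/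
open Matrix

/- The columns of `[v₃; v₄]` have pairwise disjoint supports, so its Gram matrix is diagonal with
entries `κ₃ m ^ 2 + κ₄ m ^ 2`; over `ℝ` a matrix has the same rank as its Gram matrix. -/

theorem Matrix.transpose_mul_self_of_ite_const {ι α R : Type*}
    [Fintype ι] [DecidableEq ι] [Nonempty ι] [Fintype α] [DecidableEq α]
    [NonUnitalNonAssocSemiring R] (c : α → R) :
    (of fun (f : ι → α) (m : α) => if f = Function.const ι m then c m else 0)ᵀ *
        (of fun (f : ι → α) (m : α) => if f = Function.const ι m then c m else 0) =
      diagonal fun m => c m * c m := by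
  ext m m'
  simp only [mul_apply, transpose_apply, of_apply, ite_mul, zero_mul, Finset.sum_ite_eq',
    Finset.mem_univ, if_true, Function.const_inj, mul_ite, mul_zero, diagonal_apply]
  obtain rfl | hne := eq_or_ne m m'
  · simp
  · simp [hne, hne.symm]

theorem stmt_9_general (d : ℕ) (κ₃ κ₄ : Fin d → ℝ) :
    (Matrix.fromRows
        (Matrix.of fun (f : Fin 2 → Fin d) (m : Fin d) =>
          if f = Function.const (Fin 2) m then κ₃ m else 0)
        (Matrix.of fun (f : Fin 3 → Fin d) (m : Fin d) =>
          if f = Function.const (Fin 3) m then κ₄ m else 0)).rank =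
      (Finset.univ.filter fun m : Fin d => κ₃ m ≠ 0 ∨ κ₄ m ≠ 0).card := by
  rw [← rank_transpose_mul_self, transpose_fromRows, fromCols_mul_fromRows,
    transpose_mul_self_of_ite_const, transpose_mul_self_of_ite_const, diagonal_add,
    rank_diagonal, Fintype.card_subtype]
  simp only [ne_eq, mul_self_add_mul_self_eq_zero, not_and_or]

/-- The vertically stacked matrix `[v₃; v₄]` of third- and fourth-order cumulant
matrices has rank equal to the number of indices `m` with `κ₃ m ≠ 0` or `κ₄ m ≠ 0`. -/
theorem stmt_9 (d : ℕ) (hd : 1 ≤ d) (κ₃ κ₄ : Fin d → ℝ) :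
    (Matrix.fromRows
        (Matrix.of fun (f : Fin 2 → Fin d) (m : Fin d) =>
          if f = Function.const (Fin 2) m then κ₃ m else 0)
        (Matrix.of fun (f : Fin 3 → Fin d) (m : Fin d) =>
          if f = Function.const (Fin 3) m then κ₄ m else 0)).rank =
      (Finset.univ.filter fun m : Fin d => κ₃ m ≠ 0 ∨ κ₄ m ≠ 0).card :=
  stmt_9_general d κ₃ κ₄
end

section
/- Let d ≥ 1, κ₃, κ₄ : Fin d → ℝ, and let v₃ (rows indexed by Fin 2 → Fin d) and v₄ (rows indexed by Fin 3 → Fin d) be the real matrices with columns indexed by Fin d whose (f, m) entries are κ₃(m), respectively κ₄(m), if f is constantly m and 0 otherwise. Let Ω be a real symmetric positive definite d × d matrix with Kronecker powers Ω^{⊗2} and Ω^{⊗3} (entry (f,g) equal to the product over j of Ω(f(j), g(j))), and let D be an invertible complex d × d matrix. Then the vertically stacked complex matrix [D · (v₃ᵀ Ω^{⊗2} v₃) · Dᴴ ; D · (v₄ᵀ Ω^{⊗3} v₄) · Dᴴ] (the real inner matrices viewed as complex) has rank equal to the number of indices m with κ₃(m) ≠ 0 or κ₄(m) ≠ 0.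 -/
/-!
Write `v = S · diag κ`, where `S` sends `e_m` to `e_{(m,…,m)}`. Then
`vᵀ Ω^{⊗k} v = diag κ · Ω^{∘k} · diag κ`, because `Sᵀ Ω^{⊗k} S` is the Hadamard power `Ω^{∘k}`.
By the Schur product theorem `Ω^{∘k}` is positive definite, so the kernel of
`D (vᵀ Ω^{⊗k} v) Dᴴ` is `Dᴴ⁻¹ ker (diag κ)`. Hence the kernel of the stacked matrix is the image
under `Dᴴ⁻¹` of the vectors vanishing wherever `κ₃ ≠ 0` or `κ₄ ≠ 0`, and rank–nullity finishes.
-/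

open Matrix

namespace Matrix

open scoped ComplexOrder

section Kernel

variable {K : Type*} {m m₁ m₂ n : Type*} [Fintype n]

theorem ker_mulVecLin_fromRows [CommSemiring K] (A : Matrix m₁ n K) (B : Matrix m₂ n K) :
    LinearMap.ker (fromRows A B).mulVecLin =
      LinearMap.ker A.mulVecLin ⊓ LinearMap.ker B.mulVecLin := by
  ext x
  simp only [Submodule.mem_inf, LinearMap.mem_ker, mulVecLin_apply, fromRows_mulVec,
    ← Sum.elim_zero_zero, Sum.elim_eq_iff]

theorem ker_mulVecLin_mul_of_isUnit [CommRing K] [Fintype m] [DecidableEq m]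
    {D : Matrix m m K} (hD : IsUnit D) (A : Matrix m n K) :
    LinearMap.ker (D * A).mulVecLin = LinearMap.ker A.mulVecLin := by
  rw [mulVecLin_mul, LinearMap.ker_comp_of_ker_eq_bot]
  exact LinearMap.ker_eq_bot.mpr (mulVec_injective_of_isUnit hD)

variable [Field K]

theorem rank_eq_rank_of_ker_mulVecLin_eq {A : Matrix m₁ n K} {B : Matrix m₂ n K}
    (h : LinearMap.ker A.mulVecLin = LinearMap.ker B.mulVecLin) : A.rank = B.rank := by
  have hA := LinearMap.finrank_range_add_finrank_ker A.mulVecLin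
  have hB := LinearMap.finrank_range_add_finrank_ker B.mulVecLin
  rw [h] at hA
  exact Nat.add_right_cancel (hA.trans hB.symm)

theorem mem_ker_mulVecLin_diagonal [DecidableEq n] (w x : n → K) :
    x ∈ LinearMap.ker (diagonal w).mulVecLin ↔ ∀ i, w i ≠ 0 → x i = 0 := by
  simp only [LinearMap.mem_ker, mulVecLin_apply, funext_iff, mulVec_diagonal, Pi.zero_apply,
    mul_eq_zero]
  exact forall_congr' fun i => or_iff_not_imp_left

end Kernel

theorem ker_mulVecLin_conjTranspose_mul_mul_of_posDef {𝕜 m n : Type*} [RCLike 𝕜]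
    [Fintype m] [Fintype n] {Q : Matrix m m 𝕜} (hQ : Q.PosDef) (A : Matrix m n 𝕜) :
    LinearMap.ker (Aᴴ * Q * A).mulVecLin = LinearMap.ker A.mulVecLin := by
  ext x
  simp only [LinearMap.mem_ker, mulVecLin_apply]
  refine ⟨fun h => ?_, fun h => by rw [← mulVec_mulVec, h, mulVec_zero]⟩
  by_contra hAx
  have hform : star (A *ᵥ x) ⬝ᵥ Q *ᵥ (A *ᵥ x) = star x ⬝ᵥ (Aᴴ * Q * A) *ᵥ x := by
    rw [← mulVec_mulVec, ← mulVec_mulVec, dotProduct_mulVec (star x), vecMul_conjTranspose,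
      star_star]
  exact (hQ.dotProduct_mulVec_pos hAx).ne' (by rw [hform, h, dotProduct_zero])

open scoped MatrixOrder in
theorem PosDef.map_ofReal {n : Type*} [Fintype n] [DecidableEq n] {A : Matrix n n ℝ}
    (hA : A.PosDef) : (A.map Complex.ofReal).PosDef := by
  obtain ⟨B, rfl⟩ := CStarAlgebra.nonneg_iff_eq_star_mul_self.mp hA.posSemidef.nonneg
  have hsemi : ((star B * B).map Complex.ofReal).PosSemidef := by
    rw [show (Complex.ofReal : ℝ → ℂ) = Complex.ofRealHom from rfl, Matrix.map_mul,
      star_eq_conjTranspose,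
      conjTranspose_map (⇑Complex.ofRealHom) fun r => (Complex.conj_ofReal r).symm]
    exact posSemidef_conjTranspose_mul_self _
  exact hsemi.posDef_iff_isUnit.mpr (hA.isUnit.map Complex.ofRealHom.mapMatrix)

theorem PosDef.hadamard_pow {𝕜 n : Type*} [RCLike 𝕜] {A : Matrix n n 𝕜} (hA : A.PosDef)
    {k : ℕ} (hk : 1 ≤ k) : (of fun i j => A i j ^ k).PosDef := by
  induction k, hk using Nat.le_induction with
  | base => simp only [pow_one]; exact hA
  | succ k _ ih =>
    have hsucc : (of fun i j => A i j ^ (k + 1)) = (of fun i j => A i j ^ k) ⊙ A := by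
      ext; simp [pow_succ]
    exact hsucc ▸ ih.hadamard hA

section TensorPower

variable {ι n α : Type*}

variable (ι) in
def kroneckerPow [Fintype ι] [CommMonoid α] (A : Matrix n n α) :
    Matrix (ι → n) (ι → n) α :=
  of fun f g => ∏ j, A (f j) (g j)

variable (ι) in
/-- The diagonal tensor with diagonal `κ`, flattened along its first `ι`-many legs
(the paper's `v₃`, `v₄`). -/
def diagTensor [DecidableEq (ι → n)] [Zero α] (κ : n → α) : Matrix (ι → n) n α :=
  of fun f m => if f = Function.const ι m then κ m else 0

theorem kroneckerPow_submatrix_const [Fintype ι] [CommMonoid α] (A : Matrix n n α) :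
    (kroneckerPow ι A).submatrix (Function.const ι) (Function.const ι) =
      of fun i j => A i j ^ Fintype.card ι := by
  ext i j
  simp [kroneckerPow, Finset.prod_const]

theorem diagTensor_transpose_mul_mul_diagTensor [Fintype ι] [DecidableEq ι] [Fintype n]
    [DecidableEq n] [DecidableEq (ι → n)] [CommSemiring α] (κ : n → α)
    (Q : Matrix (ι → n) (ι → n) α) :
    (diagTensor ι κ)ᵀ * Q * diagTensor ι κ =
      diagonal κ * Q.submatrix (Function.const ι) (Function.const ι) * diagonal κ := by
  ext i j
  rw [mul_diagonal, diagonal_mul]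
  simp [diagTensor, mul_apply, mul_ite, mul_comm, mul_left_comm]

theorem ker_mulVecLin_diagTensor_transpose_mul_kroneckerPow_mul [Fintype ι] [DecidableEq ι]
    [Nonempty ι] [Fintype n] [DecidableEq n] [DecidableEq (ι → n)] {Ω : Matrix n n ℝ}
    (hΩ : Ω.PosDef) (κ : n → ℝ) :
    LinearMap.ker
        (((diagTensor ι κ)ᵀ * kroneckerPow ι Ω * diagTensor ι κ).map Complex.ofReal).mulVecLin =
      LinearMap.ker (diagonal fun i => (κ i : ℂ)).mulVecLin := by
  have hH : ((of fun i j => Ω i j ^ Fintype.card ι).map Complex.ofReal).PosDef :=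
    (hΩ.hadamard_pow Fintype.card_pos).map_ofReal
  have hκ : (diagonal fun i => (κ i : ℂ))ᴴ = diagonal fun i => (κ i : ℂ) := by
    simp [diagonal_conjTranspose, Pi.star_def]
  rw [diagTensor_transpose_mul_mul_diagTensor, kroneckerPow_submatrix_const,
    ← ker_mulVecLin_conjTranspose_mul_mul_of_posDef hH (diagonal fun i => (κ i : ℂ)), hκ,
    show (Complex.ofReal : ℝ → ℂ) = Complex.ofRealHom from rfl, Matrix.map_mul, Matrix.map_mul,
    diagonal_map (map_zero _)]

end TensorPower

theorem rank_fromRows_diagTensor_kroneckerPow {ι₃ ι₄ n : Type*} [Fintype ι₃] [DecidableEq ι₃]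
    [Nonempty ι₃] [Fintype ι₄] [DecidableEq ι₄] [Nonempty ι₄] [Fintype n] [DecidableEq n]
    [DecidableEq (ι₃ → n)] [DecidableEq (ι₄ → n)] (κ₃ κ₄ : n → ℝ) {Ω : Matrix n n ℝ}
    (hΩ : Ω.PosDef) {D : Matrix n n ℂ} (hD : IsUnit D) :
    (fromRows
        (D * ((diagTensor ι₃ κ₃)ᵀ * kroneckerPow ι₃ Ω * diagTensor ι₃ κ₃).map Complex.ofReal * Dᴴ)
        (D * ((diagTensor ι₄ κ₄)ᵀ * kroneckerPow ι₄ Ω * diagTensor ι₄ κ₄).map Complex.ofReal * Dᴴ)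
      ).rank = (Finset.univ.filter fun m => κ₃ m ≠ 0 ∨ κ₄ m ≠ 0).card := by
  have hDH : IsUnit Dᴴ.det := by
    rw [det_conjTranspose]
    exact ((isUnit_iff_isUnit_det D).mp hD).star
  rw [← fromRows_mul, rank_mul_eq_left_of_isUnit_det _ _ hDH]
  calc _ = (diagonal fun m => if κ₃ m ≠ 0 ∨ κ₄ m ≠ 0 then (1 : ℂ) else 0).rank := by
        apply rank_eq_rank_of_ker_mulVecLin_eq
        rw [ker_mulVecLin_fromRows, ker_mulVecLin_mul_of_isUnit hD, ker_mulVecLin_mul_of_isUnit hD,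
          ker_mulVecLin_diagTensor_transpose_mul_kroneckerPow_mul hΩ,
          ker_mulVecLin_diagTensor_transpose_mul_kroneckerPow_mul hΩ]
        ext x
        simp only [Submodule.mem_inf, mem_ker_mulVecLin_diagonal, ← forall_and]
        refine forall_congr' fun m => ?_
        simp only [ne_eq, Complex.ofReal_eq_zero, ite_eq_right_iff, one_ne_zero, imp_false]
        tauto
    _ = _ := by
        rw [rank_diagonal, Fintype.card_subtype]
        simp only [ne_eq, ite_eq_right_iff, one_ne_zero, imp_false, not_not]

end Matrix

theorem stmt_15_general (d : ℕ) (κ₃ κ₄ : Fin d → ℝ)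
    (Ω : Matrix (Fin d) (Fin d) ℝ) (hΩ : Ω.PosDef)
    (D : Matrix (Fin d) (Fin d) ℂ) (hD : IsUnit D) :
    (Matrix.fromRows
        (D *
          ((Matrix.of fun (f : Fin 2 → Fin d) (m : Fin d) =>
                if f = Function.const (Fin 2) m then κ₃ m else 0)ᵀ *
              (Matrix.of fun f g : Fin 2 → Fin d => ∏ j, Ω (f j) (g j)) *
              (Matrix.of fun (f : Fin 2 → Fin d) (m : Fin d) =>
                if f = Function.const (Fin 2) m then κ₃ m else 0)).map
            Complex.ofReal *
          Dᴴ)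
        (D *
          ((Matrix.of fun (f : Fin 3 → Fin d) (m : Fin d) =>
                if f = Function.const (Fin 3) m then κ₄ m else 0)ᵀ *
              (Matrix.of fun f g : Fin 3 → Fin d => ∏ j, Ω (f j) (g j)) *
              (Matrix.of fun (f : Fin 3 → Fin d) (m : Fin d) =>
                if f = Function.const (Fin 3) m then κ₄ m else 0)).map
            Complex.ofReal *
          Dᴴ)).rank =
      (Finset.univ.filter fun m : Fin d => κ₃ m ≠ 0 ∨ κ₄ m ≠ 0).card :=
  rank_fromRows_diagTensor_kroneckerPow κ₃ κ₄ hΩ hD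

/-- Third claim of Proposition 1: the vertically stacked matrix
`[D (v₃ᵀ Ω^{⊗2} v₃) Dᴴ ; D (v₄ᵀ Ω^{⊗3} v₄) Dᴴ]`, with `Ω` symmetric positive definite
and `D` invertible complex, has rank equal to the number of indices `m` with
`κ₃ m ≠ 0` or `κ₄ m ≠ 0`. -/
theorem stmt_15 (d : ℕ) (hd : 1 ≤ d) (κ₃ κ₄ : Fin d → ℝ)
    (Ω : Matrix (Fin d) (Fin d) ℝ) (hΩ : Ω.PosDef)
    (D : Matrix (Fin d) (Fin d) ℂ) (hD : IsUnit D) :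
    (Matrix.fromRows
        (D *
          ((Matrix.of fun (f : Fin 2 → Fin d) (m : Fin d) =>
                if f = Function.const (Fin 2) m then κ₃ m else 0)ᵀ *
              (Matrix.of fun f g : Fin 2 → Fin d => ∏ j, Ω (f j) (g j)) *
              (Matrix.of fun (f : Fin 2 → Fin d) (m : Fin d) =>
                if f = Function.const (Fin 2) m then κ₃ m else 0)).map
            Complex.ofReal *
          Dᴴ)
        (D *
          ((Matrix.of fun (f : Fin 3 → Fin d) (m : Fin d) =>
                if f = Function.const (Fin 3) m then κ₄ m else 0)ᵀ *
              (Matrix.of fun f g : Fin 3 → Fin d => ∏ j, Ω (f j) (g j)) *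
              (Matrix.of fun (f : Fin 3 → Fin d) (m : Fin d) =>
                if f = Function.const (Fin 3) m then κ₄ m else 0)).map
            Complex.ofReal *
          Dᴴ)).rank =
      (Finset.univ.filter fun m : Fin d => κ₃ m ≠ 0 ∨ κ₄ m ≠ 0).card :=
  stmt_15_general d κ₃ κ₄ Ω hΩ D hD
end
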